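/- Let p = 2, n a positive integer, and m = 2^n + 1. Then the quandle X = Z_2[t,t^{-1}]/(ξ_m(t)) (Alexander quandle with x*y = tx + (1-t)y) has non-trivial second quandle cohomology with coefficients in X: H^2_Q(X; X) ≠ 0. Specifically, the 2-cocycle f(x_1, x_2) = (x_1 - x_2)^{2^n} x_2 evaluates non-trivially on the 2-cycle arising from the coloring of the (2,m)-torus knot with top color vector (1,0), giving the value t^2 ξ_m'(t) ≠ 0 in X, so f is not a coboundary. -/

import Mathlib

open LaurentPolynomial Finset Polynomial

/-!
In `Q = 𝔽₂[T, T⁻¹] / (ξ_m)` we have `ξ_m(t) = 0`, hence `t ^ m = 1`, and `t - 1` is a unit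
because it divides `ξ_m(t) - ξ_m(1) = -m = -1` (characteristic 2, `m` odd). Since
`x ↦ x ^ 2 ^ n` is additive, the cocycle identity for `f` reduces to `t ^ m = 1`. The torus-knot
colors `c_k = t ξ_k(t)` satisfy `c_{k+2} = c_k ▷ c_{k+1}` and are `m`-periodic, so every
coboundary `g x - g (x ▷ y)` telescopes to `0` on the cycle. Multiplied by `t - 1`, both the value
of `f` on the cycle and `t² ξ_m'(t)` equal `t`: the first because
`(t - 1) f(c_k, c_{k+1}) = t - t ^ (2 ^ n + 1) (t ^ k) ^ 2 ^ n` and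
`∑ (t ^ k) ^ 2 ^ n = ξ_m(t) ^ 2 ^ n = 0`, the second by differentiating
`ξ_m(X) (X - 1) = X ^ m - 1`. Finally `Q ≠ 0`, because `ξ_m` is coprime to `T` and not constant,
hence not a unit in `𝔽₂[T, T⁻¹]`.
-/

section GeomSum

variable {R : Type*} [CommRing R] {t : R} {m : ℕ}

theorem pow_eq_one_of_geom_sum_eq_zero (ht : ∑ i ∈ range m, t ^ i = 0) : t ^ m = 1 := by
  have h := geom_sum_mul t m
  rwa [ht, zero_mul, eq_comm, sub_eq_zero] at h

theorem isUnit_sub_one_of_geom_sum_eq_zero (ht : ∑ i ∈ range m, t ^ i = 0)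
    (hm : IsUnit (m : R)) : IsUnit (t - 1) := by
  have hdvd : t - 1 ∣ ∑ i ∈ range m, (t ^ i - 1 ^ i) :=
    dvd_sum fun i _ => sub_dvd_pow_sub_pow t 1 i
  simp only [one_pow, sum_sub_distrib, ht, sum_const, card_range, nsmul_one, zero_sub,
    dvd_neg] at hdvd
  exact isUnit_of_dvd_unit hdvd hm

theorem periodic_geom_sum_of_geom_sum_eq_zero (ht : ∑ i ∈ range m, t ^ i = 0) :
    Function.Periodic (fun k => ∑ i ∈ range k, t ^ i) m := fun k => by
  simp only [add_comm k m, sum_range_add, ht, pow_add, pow_eq_one_of_geom_sum_eq_zero ht,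
    one_mul, zero_add]

theorem aeval_derivative_geom_sum_mul_sub_one {S : Type*} [CommRing S] [Algebra S R]
    (t : R) (m : ℕ) :
    aeval t (derivative (∑ i ∈ range m, X ^ i : S[X])) * (t - 1) + ∑ i ∈ range m, t ^ i =
      m * t ^ (m - 1) := by
  have h := congrArg (fun p => aeval t (derivative p)) (geom_sum_mul (X : S[X]) m)
  have hξ : aeval t (∑ i ∈ range m, X ^ i : S[X]) = ∑ i ∈ range m, t ^ i := by simp
  simpa only [derivative_mul, derivative_X, derivative_one, derivative_X_pow, sub_zero, mul_one,
    map_add, map_mul, map_sub, map_one, aeval_X, map_natCast, map_pow, hξ] using h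

end GeomSum

theorem sum_coboundary_eq_zero_of_periodic {α M : Type*} [AddCommGroup M] (op : α → α → α)
    (g : α → M) {c : ℕ → α} {m : ℕ} (hc : ∀ k, op (c k) (c (k + 1)) = c (k + 2))
    (hper : Function.Periodic c m) :
    ∑ k ∈ range m, (g (c k) - g (op (c k) (c (k + 1)))) = 0 := by
  have hsplit : ∀ k, g (c k) - g (op (c k) (c (k + 1))) =
      (g (c k) - g (c (k + 1))) + (g (c (k + 1)) - g (c (k + 1 + 1))) := fun k => by
    rw [hc]; abel
  rw [sum_congr rfl fun k _ => hsplit k, sum_add_distrib, sum_range_sub' (fun k => g (c k)),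
    sum_range_sub' (fun k => g (c (k + 1))), hper.eq, add_comm m 1, hper 1]
  abel

section CharTwo

variable {R : Type*} [CommRing R] [CharP R 2] {t : R} {n : ℕ}

theorem CharTwo.natCast_two_pow_add_one (hn : n ≠ 0) : ((2 ^ n + 1 : ℕ) : R) = 1 := by
  push_cast
  rw [CharTwo.two_eq_zero, zero_pow hn, zero_add]

theorem pow_two_pow_isCocycle (n : ℕ) (ht : t ^ (2 ^ n + 1) = 1) (x y z : R) :
    (x - y) ^ 2 ^ n * y + (t * x + (1 - t) * y - z) ^ 2 ^ n * z =
      (x - z) ^ 2 ^ n * z +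
        (t * x + (1 - t) * z - (t * y + (1 - t) * z)) ^ 2 ^ n * (t * y + (1 - t) * z) := by
  rw [pow_succ] at ht
  simp only [← iterateFrobenius_def (R := R) 2 n] at ht ⊢
  simp only [map_sub, map_add, map_mul, map_one]
  linear_combination (iterateFrobenius R 2 n y - iterateFrobenius R 2 n x) * (y - z) * ht

/-- The arc colors `c_k = t ξ_k(t)` of the `(2, m)`-torus knot diagram. -/
def torusColoring (t : R) (k : ℕ) : R := t * ∑ i ∈ range k, t ^ i

theorem torusColoring_add_two (t : R) (k : ℕ) :
    t * torusColoring t k + (1 - t) * torusColoring t (k + 1) = torusColoring t (k + 2) := by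
  simp only [torusColoring, sum_range_succ]
  linear_combination (-t ^ (k + 2)) * CharTwo.two_eq_zero (R := R)

theorem sub_one_mul_sum_cocycle_torusColoring (hn : n ≠ 0)
    (ht : ∑ i ∈ range (2 ^ n + 1), t ^ i = 0) :
    (t - 1) * ∑ k ∈ range (2 ^ n + 1),
      (torusColoring t k - torusColoring t (k + 1)) ^ 2 ^ n * torusColoring t (k + 1) = t := by
  have hterm : ∀ k, (t - 1) * ((torusColoring t k - torusColoring t (k + 1)) ^ 2 ^ n *
      torusColoring t (k + 1)) = t - t * t ^ 2 ^ n * (t ^ k) ^ 2 ^ n := fun k => by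
    have hdiff : torusColoring t k - torusColoring t (k + 1) = t ^ (k + 1) := by
      rw [torusColoring, torusColoring, sum_range_succ, ← CharTwo.neg_eq (t ^ (k + 1))]; ring
    have hgeo : (t - 1) * torusColoring t (k + 1) = t * (t ^ (k + 1) - 1) := by
      rw [torusColoring, mul_left_comm, mul_geom_sum]
    have hk : (t ^ (2 ^ n + 1)) ^ (k + 1) = 1 := by
      rw [pow_eq_one_of_geom_sum_eq_zero ht, one_pow]
    rw [hdiff]
    linear_combination (t ^ (k + 1)) ^ 2 ^ n * hgeo + t * hk
  rw [mul_sum, sum_congr rfl fun k _ => hterm k, sum_sub_distrib, ← mul_sum, ← sum_pow_char_pow,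
    ht, zero_pow (pow_ne_zero _ two_ne_zero), mul_zero, sub_zero, sum_const, card_range,
    nsmul_eq_mul, CharTwo.natCast_two_pow_add_one hn, one_mul]

variable {S : Type*} [CommRing S] [Algebra S R]

theorem sub_one_mul_sq_mul_aeval_derivative_geom_sum (hn : n ≠ 0)
    (ht : ∑ i ∈ range (2 ^ n + 1), t ^ i = 0) :
    (t - 1) * (t ^ 2 * aeval t (derivative (∑ i ∈ range (2 ^ n + 1), X ^ i : S[X]))) = t := by
  have h := aeval_derivative_geom_sum_mul_sub_one (S := S) t (2 ^ n + 1)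
  rw [ht, add_zero, CharTwo.natCast_two_pow_add_one hn, one_mul, add_tsub_cancel_right] at h
  linear_combination t ^ 2 * h + t * pow_eq_one_of_geom_sum_eq_zero ht

theorem sum_cocycle_torusColoring (hn : n ≠ 0) (ht : ∑ i ∈ range (2 ^ n + 1), t ^ i = 0) :
    ∑ k ∈ range (2 ^ n + 1),
      (torusColoring t k - torusColoring t (k + 1)) ^ 2 ^ n * torusColoring t (k + 1) =
      t ^ 2 * aeval t (derivative (∑ i ∈ range (2 ^ n + 1), X ^ i : S[X])) := by
  have hunit : IsUnit (t - 1) := isUnit_sub_one_of_geom_sum_eq_zero ht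
    (by rw [CharTwo.natCast_two_pow_add_one hn]; exact isUnit_one)
  refine hunit.mul_left_cancel ?_
  rw [sub_one_mul_sum_cocycle_torusColoring hn ht,
    sub_one_mul_sq_mul_aeval_derivative_geom_sum hn ht]

theorem sq_mul_aeval_derivative_geom_sum_ne_zero [Nontrivial R] (hn : n ≠ 0)
    (ht : ∑ i ∈ range (2 ^ n + 1), t ^ i = 0) :
    t ^ 2 * aeval t (derivative (∑ i ∈ range (2 ^ n + 1), X ^ i : S[X])) ≠ 0 := by
  intro h
  have ht0 := sub_one_mul_sq_mul_aeval_derivative_geom_sum (S := S) hn ht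
  rw [h, mul_zero] at ht0
  have htm := pow_eq_one_of_geom_sum_eq_zero ht
  rw [← ht0, zero_pow (Nat.succ_ne_zero _)] at htm
  exact zero_ne_one htm

end CharTwo

theorem Ideal.Quotient.mk_toLaurent {R : Type*} [CommRing R] (I : Ideal R[T;T⁻¹]) (p : R[X]) :
    Ideal.Quotient.mk I (toLaurent p) = aeval (Ideal.Quotient.mk I (T 1)) p := by
  simpa using (aeval_algHom_apply ((Ideal.Quotient.mkₐ R I).comp toLaurentAlg) X p).symm

theorem Polynomial.not_isUnit_toLaurent {K : Type*} [Field K] {p : K[X]} (h0 : p.coeff 0 ≠ 0)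
    (hp : ¬IsUnit p) : ¬IsUnit (toLaurent p) := by
  rw [← algebraMap_eq_toLaurent, IsLocalization.Away.algebraMap_isUnit_iff (X : K[X])]
  rintro ⟨N, hN⟩
  have hcop : IsCoprime p (X ^ N) :=
    ((irreducible_X.coprime_iff_not_dvd.mpr (mt X_dvd_iff.mp h0)).symm).pow_right
  exact hp (hcop.isUnit_of_dvd' dvd_rfl hN)

theorem Polynomial.coeff_geom_sum_X {R : Type*} [CommRing R] {m i : ℕ} (hi : i < m) :
    (∑ j ∈ range m, X ^ j : R[X]).coeff i = 1 := by
  simp [coeff_X_pow, hi]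

theorem Polynomial.not_isUnit_geom_sum_X {R : Type*} [CommRing R] [IsDomain R] {m : ℕ}
    (hm : 2 ≤ m) : ¬IsUnit (∑ i ∈ range m, X ^ i : R[X]) := by
  intro hu
  obtain ⟨r, -, hr⟩ := Polynomial.isUnit_iff.mp hu
  have h1 := congrArg (coeff · 1) hr
  simp only [coeff_C_succ, coeff_geom_sum_X hm] at h1
  exact zero_ne_one h1

theorem nontrivial_quotient_span_toLaurent_geom_sum {K : Type*} [Field K] {m : ℕ}
    (hm : 2 ≤ m) :
    Nontrivial (K[T;T⁻¹] ⧸ Ideal.span {toLaurent (∑ i ∈ range m, X ^ i : K[X])}) := by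
  refine Ideal.Quotient.nontrivial_iff.mpr (Ideal.span_singleton_ne_top ?_)
  refine not_isUnit_toLaurent ?_ (not_isUnit_geom_sum_X hm)
  rw [coeff_geom_sum_X (by omega)]
  exact one_ne_zero

/-- for `m = 2ⁿ+1` and the Alexander quandle
`X = Z_2[t,t⁻¹]/(ξ_m(t))`, the map `f(x₁,x₂) = (x₁-x₂)^{2ⁿ} x₂` is a quandle
2-cocycle which evaluates on the 2-cycle of the `(2,m)`-torus knot coloring
with top color vector `(1,0)` to `t²ξ_m'(t) ≠ 0`, and `f` is not a coboundary;
hence `H²_Q(X;X) ≠ 0`. -/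
theorem stmt19 (n : ℕ) (hn : 0 < n) :
    let m := 2 ^ n + 1
    let ξpoly : Polynomial (ZMod 2) := ∑ i ∈ Finset.range m, X ^ i
    let Q := LaurentPolynomial (ZMod 2) ⧸ Ideal.span {ξpoly.toLaurent}
    let t : Q := Ideal.Quotient.mk (Ideal.span {ξpoly.toLaurent}) (T 1)
    let op : Q → Q → Q := fun x y => t * x + (1 - t) * y
    let f : Q → Q → Q := fun x1 x2 => (x1 - x2) ^ (2 ^ n) * x2
    let ξ : ℕ → Q := fun k => ∑ i ∈ Finset.range k, t ^ i
    let ξ' : Q := Ideal.Quotient.mk (Ideal.span {ξpoly.toLaurent})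
      ((Polynomial.derivative ξpoly).toLaurent)
    -- f is a quandle 2-cocycle:
    ((∀ x y z : Q, f x y + f (op x y) z = f x z + f (op x z) (op y z)) ∧
      (∀ x : Q, f x x = 0)) ∧
    -- its evaluation on the torus-knot 2-cycle is t²ξ_m'(t) ≠ 0:
    ((∑ k ∈ Finset.range m, f (t * ξ k) (t * ξ (k + 1))) = t ^ 2 * ξ' ∧
      t ^ 2 * ξ' ≠ 0) ∧
    -- f is not a 2-coboundary, so H²_Q(X;X) ≠ 0:
    ¬ ∃ g : Q → Q, ∀ x y : Q, f x y = g x - g (op x y) := by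
  intro m ξpoly Q t op f ξ ξ'
  have : Nontrivial Q := nontrivial_quotient_span_toLaurent_geom_sum
    (Nat.succ_le_succ Nat.one_le_two_pow)
  have : CharP Q 2 := charP_of_injective_algebraMap' (ZMod 2) 2
  have ht : ∑ i ∈ range m, t ^ i = 0 := by
    have h := Ideal.Quotient.mk_toLaurent (Ideal.span {ξpoly.toLaurent}) ξpoly
    rw [Ideal.Quotient.eq_zero_iff_mem.mpr (Ideal.subset_span (Set.mem_singleton _))] at h
    simpa [ξpoly] using h.symm
  have hξ' : ξ' = aeval t (derivative ξpoly) := Ideal.Quotient.mk_toLaurent _ _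
  have heval : ∑ k ∈ range m, f (t * ξ k) (t * ξ (k + 1)) = t ^ 2 * ξ' :=
    hξ' ▸ sum_cocycle_torusColoring hn.ne' ht
  have hne : t ^ 2 * ξ' ≠ 0 := hξ' ▸ sq_mul_aeval_derivative_geom_sum_ne_zero hn.ne' ht
  refine ⟨⟨pow_two_pow_isCocycle n (pow_eq_one_of_geom_sum_eq_zero ht), fun x => ?_⟩,
    ⟨heval, hne⟩, ?_⟩
  · simp [f]
  · rintro ⟨g, hg⟩
    apply hne
    rw [← heval, sum_congr rfl fun k _ => hg _ _]
    exact sum_coboundary_eq_zero_of_periodic op g (c := torusColoring t) (torusColoring_add_two t)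
      ((periodic_geom_sum_of_geom_sum_eq_zero ht).comp (t * ·))
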